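/- For each fixed k, the sequence of Walsh–Fourier coefficients \hatφ_s^n(k) of the truncated kernels is nondecreasing in n (for n with 2^n > k) and converges to \hatφ_s(k), the Walsh–Fourier coefficient of the full s-kernel. -/

import Mathlib

open MeasureTheory Filter Topology
open scoped ENNReal Classical

/-- The Cantor dyadic group: sequences of 0s and 1s with coordinatewise addition mod 2. -/
abbrev G : Type := ℕ → ZMod 2

/-- The metric ρ(x,y) = ∑_{i=1}^∞ 2^{-i} |x_i - y_i| (coordinates indexed from 0 here). -/
noncomputable def rho (x y : G) : ℝ :=
  ∑' i : ℕ, (2:ℝ) ^ (-(i:ℝ) - 1) * (if x i = y i then 0 else 1)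

/-- The subgroup G_n of sequences vanishing in the first n coordinates. -/
def Gset (n : ℕ) : Set G := {x | ∀ i < n, x i = 0}

/-- The coset K_n(x) = x + G_n of G_n containing x. -/
def Kset (n : ℕ) (x : G) : Set G := {y | x - y ∈ Gset n}

/-- The k-th Walsh function. -/
def walsh (k : ℕ) (x : G) : ℝ :=
  ∏ i ∈ Finset.range k, if k.testBit i ∧ x i = 1 then (-1 : ℝ) else 1

/-- The s-kernel: φ_s(0) = 0 and φ_s(x) = 2^{s(n-1)} for x ∈ G_{n-1} \ G_n,
i.e. 2^{s j} where j is the first nonzero coordinate of x. -/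
noncomputable def kernel (s : ℝ) (x : G) : ℝ :=
  if h : ∃ i, x i ≠ 0 then (2:ℝ) ^ (s * (Nat.find h : ℝ)) else 0

/-- The truncated s-kernel φ_s^n. -/
noncomputable def kernelTrunc (s : ℝ) (n : ℕ) (x : G) : ℝ :=
  if x = 0 then 0 else if x ∈ Gset n then (2:ℝ) ^ (s * (n:ℝ)) else kernel s x

/-- Walsh–Fourier coefficient of the s-kernel w.r.t. a (Haar) measure lam. -/
noncomputable def phiHat (s : ℝ) (lam : Measure G) (k : ℕ) : ℝ :=
  ∫ x, kernel s x * walsh k x ∂lam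

/-- Walsh–Fourier coefficient of the truncated s-kernel. -/
noncomputable def phiHatTrunc (s : ℝ) (n : ℕ) (lam : Measure G) (k : ℕ) : ℝ :=
  ∫ x, kernelTrunc s n x * walsh k x ∂lam

/-- Walsh–Fourier coefficient of a measure μ. -/
noncomputable def muHat (μ : Measure G) (k : ℕ) : ℝ :=
  ∫ x, walsh k x ∂μ

/-- s-potential of μ at x. -/
noncomputable def potential (s : ℝ) (μ : Measure G) (x : G) : ℝ≥0∞ :=
  ∫⁻ y, ENNReal.ofReal (kernel s (x - y)) ∂μ

/-- s-energy of μ. -/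
noncomputable def energy (s : ℝ) (μ : Measure G) : ℝ≥0∞ :=
  ∫⁻ x, ∫⁻ y, ENNReal.ofReal (kernel s (x - y)) ∂μ ∂μ

/-- truncated s-energy of μ. -/
noncomputable def energyTrunc (s : ℝ) (n : ℕ) (μ : Measure G) : ℝ≥0∞ :=
  ∫⁻ x, ∫⁻ y, ENNReal.ofReal (kernelTrunc s n (x - y)) ∂μ ∂μ

/-- Diameter of a set in the metric ρ, valued in ℝ≥0∞. -/
noncomputable def diamRho (I : Set G) : ℝ≥0∞ :=
  ⨆ x ∈ I, ⨆ y ∈ I, ENNReal.ofReal (rho x y)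

/-- Pre-Hausdorff measure H^s_δ via countable covers of ρ-diameter < δ. -/
noncomputable def Hdelta (s : ℝ) (δ : ℝ≥0∞) (A : Set G) : ℝ≥0∞ :=
  ⨅ (I : ℕ → Set G) (_ : A ⊆ ⋃ i, I i) (_ : ∀ i, diamRho (I i) < δ),
    ∑' i, diamRho (I i) ^ s

/-- s-dimensional Hausdorff measure w.r.t. the metric ρ. -/
noncomputable def Hmeas (s : ℝ) (A : Set G) : ℝ≥0∞ :=
  ⨆ (δ : ℝ≥0∞) (_ : 0 < δ), Hdelta s δ A

/-- Hausdorff dimension w.r.t. the metric ρ. -/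
noncomputable def hdimRho (A : Set G) : ℝ≥0∞ :=
  ⨆ (t : ℝ) (_ : Hmeas t A = ⊤), ENNReal.ofReal t

/-!
For `m ≤ n` the truncations φ_s^m and φ_s^n coincide off G_m, while on G_m the Walsh function
w_k (`k < 2^m`) is identically 1 and φ_s^m ≤ φ_s^n; integrating gives monotonicity. For the limit,
φ_s^n(x) is eventually φ_s(x) and is dominated by it, so dominated convergence applies once φ_s is
integrable: φ_s ≤ ∑_j 2^{sj} 1_{G_j}, the 2^j disjoint translates of G_j cover G so that
λ(G_j) = 2^{-j}, and ∑_j 2^{(s-1)j} < ∞ because s < 1.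
-/

lemma measurableSet_Gset (n : ℕ) : MeasurableSet (Gset n) := by
  unfold Gset
  measurability

lemma Gset_antitone : Antitone Gset :=
  fun _ _ hmn _ hx i hi => hx i (hi.trans_le hmn)

lemma two_pow_mul_measure_Gset (μ : Measure G) [μ.IsAddLeftInvariant] (n : ℕ) :
    2 ^ n * μ (Gset n) = μ Set.univ := by
  let π : G → (Fin n → ZMod 2) := fun x i => x i
  have hπ : Function.Surjective π := Fin.val_injective.surjective_comp_right
  have hπm : Measurable π := measurable_pi_lambda _ fun i => measurable_pi_apply _
  have hfiber : ∀ a : G, π ⁻¹' {π a} = (-a + ·) ⁻¹' Gset n := by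
    intro a
    ext x
    simp only [π, Gset, Set.mem_preimage, Set.mem_singleton_iff, Set.mem_ofPred_eq, funext_iff,
      Fin.forall_iff, Pi.add_apply, Pi.neg_apply, neg_add_eq_zero]
    exact forall₂_congr fun _ _ => eq_comm
  have hfiber_measure : ∀ v, μ (π ⁻¹' {v}) = μ (Gset n) := by
    intro v
    obtain ⟨a, rfl⟩ := hπ v
    rw [hfiber, measure_preimage_add]
  calc 2 ^ n * μ (Gset n) = ∑ v : Fin n → ZMod 2, μ (π ⁻¹' {v}) := by
        simp [hfiber_measure]
    _ = μ Set.univ := by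
        rw [sum_measure_preimage_singleton _ fun v _ => hπm (measurableSet_singleton v)]
        simp

lemma measurable_walsh (k : ℕ) : Measurable (walsh k) :=
  Finset.measurable_prod _ fun i _ => Measurable.ite
    ((MeasurableSet.const _).inter (measurable_pi_apply i (measurableSet_singleton 1)))
    measurable_const measurable_const

lemma norm_walsh_le_one (k : ℕ) (x : G) : ‖walsh k x‖ ≤ 1 := by
  rw [walsh, norm_prod]
  exact Finset.prod_le_one (fun _ _ => norm_nonneg _) fun i _ => by split <;> simp

lemma walsh_eq_one_of_mem_Gset {k m : ℕ} (hk : k < 2 ^ m) {x : G} (hx : x ∈ Gset m) :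
    walsh k x = 1 := by
  refine Finset.prod_eq_one fun i _ => ?_
  rcases lt_or_ge i m with hi | hi
  · simp [hx i hi]
  · simp [Nat.testBit_lt_two_pow (hk.trans_le (Nat.pow_le_pow_right two_pos hi))]

lemma exists_mem_Gset_notMem_Gset_succ {x : G} (hx : x ≠ 0) :
    ∃ j : ℕ, x ∈ Gset j ∧ x ∉ Gset (j + 1) ∧ ∀ s, kernel s x = 2 ^ (s * j) := by
  have h : ∃ i, x i ≠ 0 := Function.ne_iff.mp hx
  exact ⟨Nat.find h, fun i hi => not_not.mp (Nat.find_min h hi),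
    fun hG => Nat.find_spec h (hG _ (Nat.lt_succ_self _)), fun s => by simp [kernel, h]⟩

lemma kernel_zero (s : ℝ) : kernel s 0 = 0 := by
  simp [kernel]

lemma kernel_nonneg (s : ℝ) (x : G) : 0 ≤ kernel s x := by
  unfold kernel
  split <;> positivity

lemma measurable_kernel (s : ℝ) : Measurable (kernel s) := by
  -- the disjunct `x = 0` makes the search for the first nonzero coordinate total
  have h : ∀ x : G, ∃ n, x = 0 ∨ x n ≠ 0 := fun x =>
    if hx : x = 0 then ⟨0, .inl hx⟩ else (Function.ne_iff.mp hx).imp fun _ => .inr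
  have hfind : Measurable fun x => Nat.find (h x) :=
    measurable_find h fun n =>
      (measurableSet_singleton 0).union (measurable_pi_apply n (measurableSet_singleton 0)).compl
  have hkernel : kernel s = fun x => if x = 0 then 0 else 2 ^ (s * Nat.find (h x)) := by
    funext x
    by_cases hx : x = 0
    · simp [hx, kernel_zero]
    · have h' : ∃ i, x i ≠ 0 := Function.ne_iff.mp hx
      simp only [kernel, h', hx, dite_true, if_false]
      congr 3
      exact Nat.find_congr' (by simp)
  rw [hkernel]
  exact Measurable.ite (measurableSet_singleton 0) measurable_const
    ((measurable_from_nat (f := fun n : ℕ => (2 : ℝ) ^ (s * n))).comp hfind)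

lemma integrable_kernel {s : ℝ} (hs1 : s < 1) (μ : Measure G) [IsFiniteMeasure μ]
    [μ.IsAddLeftInvariant] : Integrable (kernel s) μ := by
  refine ⟨(measurable_kernel s).aestronglyMeasurable, ?_⟩
  set c : ℝ≥0∞ := 2 ^ s
  have hpt : ∀ x, ‖kernel s x‖ₑ ≤ ∑' j : ℕ, (Gset j).indicator (fun _ => c ^ j) x := by
    intro x
    by_cases hx : x = 0
    · simp [hx, kernel_zero]
    obtain ⟨j, hxj, -, hkj⟩ := exists_mem_Gset_notMem_Gset_succ hx
    refine le_trans (le_of_eq ?_) (ENNReal.le_tsum j)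
    rw [Set.indicator_of_mem hxj, hkj, Real.enorm_of_nonneg (by positivity),
      ← ENNReal.ofReal_rpow_of_pos two_pos, ENNReal.rpow_mul, ENNReal.rpow_natCast]
    simp [c]
  have hc : c * 2⁻¹ < 1 := by
    rw [← div_eq_mul_inv]
    refine ENNReal.div_lt_of_lt_mul ?_
    calc c < 2 ^ (1 : ℝ) := 
        ENNReal.rpow_lt_rpow_of_exponent_lt ENNReal.one_lt_two ENNReal.ofNat_ne_top hs1
      _ = 1 * 2 := by simp
  calc ∫⁻ x, ‖kernel s x‖ₑ ∂μ
      ≤ ∫⁻ x, ∑' j : ℕ, (Gset j).indicator (fun _ => c ^ j) x ∂μ := lintegral_mono hpt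
    _ = ∑' j : ℕ, c ^ j * μ (Gset j) := by
        rw [lintegral_tsum fun j =>
          (measurable_const.indicator (measurableSet_Gset j)).aemeasurable]
        simp_rw [lintegral_indicator_const (measurableSet_Gset _)]
    _ = ∑' j : ℕ, (c * 2⁻¹) ^ j * μ Set.univ := by
        congr 1 with j
        rw [← two_pow_mul_measure_Gset μ j, mul_pow, ← ENNReal.inv_pow, mul_assoc,
          ENNReal.inv_mul_cancel_left (by simp) (by simp)]
    _ < ∞ := by
        rw [ENNReal.tsum_mul_right, ENNReal.tsum_geometric]
        exact ENNReal.mul_lt_top (ENNReal.inv_lt_top.mpr (tsub_pos_of_lt hc)) (measure_lt_top _ _)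

lemma kernelTrunc_nonneg (s : ℝ) (n : ℕ) (x : G) : 0 ≤ kernelTrunc s n x := by
  unfold kernelTrunc
  split_ifs
  exacts [le_rfl, by positivity, kernel_nonneg s x]

lemma kernelTrunc_of_notMem_Gset {s : ℝ} {n : ℕ} {x : G} (hx : x ∉ Gset n) :
    kernelTrunc s n x = kernel s x := by
  have hx0 : x ≠ 0 := by
    rintro rfl
    exact hx fun _ _ => rfl
  simp [kernelTrunc, hx0, hx]

lemma rpow_le_kernel_of_mem_Gset {s : ℝ} (hs : 0 ≤ s) {n : ℕ} {x : G} (hx0 : x ≠ 0)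
    (hx : x ∈ Gset n) : (2 : ℝ) ^ (s * n) ≤ kernel s x := by
  obtain ⟨j, -, hj, hkj⟩ := exists_mem_Gset_notMem_Gset_succ hx0
  have hnj : n ≤ j := by
    by_contra! h
    exact hj (Gset_antitone h hx)
  rw [hkj]
  gcongr
  norm_num

lemma kernelTrunc_le_kernel {s : ℝ} (hs : 0 ≤ s) (n : ℕ) (x : G) :
    kernelTrunc s n x ≤ kernel s x := by
  unfold kernelTrunc
  split_ifs with hx0 hx
  · rw [hx0, kernel_zero]
  · exact rpow_le_kernel_of_mem_Gset hs hx0 hx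
  · exact le_rfl

lemma monotone_kernelTrunc {s : ℝ} (hs : 0 ≤ s) (x : G) : Monotone (kernelTrunc s · x) := by
  intro m n hmn
  dsimp only
  by_cases hxm : x ∈ Gset m
  · by_cases hx0 : x = 0
    · simp [kernelTrunc, hx0]
    simp only [kernelTrunc, hx0, hxm, if_false, if_true]
    split_ifs with hxn
    · gcongr
      norm_num
    · exact rpow_le_kernel_of_mem_Gset hs hx0 hxm
  · rw [kernelTrunc_of_notMem_Gset hxm,
      kernelTrunc_of_notMem_Gset fun hxn => hxm (Gset_antitone hmn hxn)]

lemma eventually_kernelTrunc_eq_kernel (s : ℝ) (x : G) :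
    ∀ᶠ n in atTop, kernelTrunc s n x = kernel s x := by
  by_cases hx0 : x = 0
  · simp [kernelTrunc, hx0, kernel_zero]
  obtain ⟨j, -, hj, -⟩ := exists_mem_Gset_notMem_Gset_succ hx0
  filter_upwards [eventually_ge_atTop (j + 1)] with n hn
  exact kernelTrunc_of_notMem_Gset fun hxn => hj (Gset_antitone hn hxn)

lemma measurable_kernelTrunc (s : ℝ) (n : ℕ) : Measurable (kernelTrunc s n) :=
  Measurable.ite (measurableSet_singleton 0) measurable_const
    (Measurable.ite (measurableSet_Gset n) measurable_const (measurable_kernel s))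

lemma norm_kernelTrunc_mul_walsh_le {s : ℝ} (hs : 0 ≤ s) (n k : ℕ) (x : G) :
    ‖kernelTrunc s n x * walsh k x‖ ≤ kernel s x := by
  rw [norm_mul, Real.norm_of_nonneg (kernelTrunc_nonneg s n x)]
  calc kernelTrunc s n x * ‖walsh k x‖ ≤ kernelTrunc s n x * 1 :=
        mul_le_mul_of_nonneg_left (norm_walsh_le_one k x) (kernelTrunc_nonneg s n x)
    _ ≤ kernel s x := (mul_one _).trans_le (kernelTrunc_le_kernel hs n x)

lemma integrable_kernelTrunc_mul_walsh {s : ℝ} (hs : 0 ≤ s) (hs1 : s < 1) (μ : Measure G)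
    [IsFiniteMeasure μ] [μ.IsAddLeftInvariant] (n k : ℕ) :
    Integrable (fun x => kernelTrunc s n x * walsh k x) μ :=
  (integrable_kernel hs1 μ).mono'
    ((measurable_kernelTrunc s n).mul (measurable_walsh k)).aestronglyMeasurable
    (ae_of_all _ (norm_kernelTrunc_mul_walsh_le hs n k))

lemma kernelTrunc_mul_walsh_mono {s : ℝ} (hs : 0 ≤ s) {k m n : ℕ} (hk : k < 2 ^ m)
    (hmn : m ≤ n) (x : G) : kernelTrunc s m x * walsh k x ≤ kernelTrunc s n x * walsh k x := by
  by_cases hxm : x ∈ Gset m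
  · simpa [walsh_eq_one_of_mem_Gset hk hxm] using monotone_kernelTrunc hs x hmn
  · rw [kernelTrunc_of_notMem_Gset hxm,
      kernelTrunc_of_notMem_Gset fun hxn => hxm (Gset_antitone hmn hxn)]

/-- For fixed k, \hatφ_s^n(k) is nondecreasing in n (for 2^n > k) and converges to \hatφ_s(k). -/
theorem stmt9 (s : ℝ) (hs : 0 < s) (hs1 : s < 1)
    (lam : Measure G) [IsProbabilityMeasure lam] [lam.IsAddLeftInvariant] (k : ℕ) :
    (∀ m n : ℕ, m ≤ n → k < 2 ^ m → phiHatTrunc s m lam k ≤ phiHatTrunc s n lam k) ∧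
    Tendsto (fun n => phiHatTrunc s n lam k) atTop (𝓝 (phiHat s lam k)) := by
  constructor
  · intro m n hmn hk
    exact integral_mono (integrable_kernelTrunc_mul_walsh hs.le hs1 lam m k)
      (integrable_kernelTrunc_mul_walsh hs.le hs1 lam n k) (kernelTrunc_mul_walsh_mono hs.le hk hmn)
  · refine tendsto_integral_of_dominated_convergence (kernel s)
      (fun n => ((measurable_kernelTrunc s n).mul (measurable_walsh k)).aestronglyMeasurable)
      (integrable_kernel hs1 lam) (fun n => ae_of_all _ (norm_kernelTrunc_mul_walsh_le hs.le n k))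
      (ae_of_all _ fun x => tendsto_const_nhds.congr' ?_)
    filter_upwards [eventually_kernelTrunc_eq_kernel s x] with n hn
    rw [hn]
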